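/- Let d ≥ 1 and let S be the orthogonal projection onto the symmetric subspace of ℂ^d ⊗ ℂ^d (i.e., S = (I + V)/2 where V is the swap operator). Define Φ(ρ) = (2/(d+1)) · S (ρ ⊗ I_d) S for ρ ∈ M_d(ℂ). Then Φ is a quantum channel (completely positive and trace preserving), and for every unit vector |ψ⟩ ∈ ℂ^d it holds that ⟨ψ ⊗ ψ| Φ(|ψ⟩⟨ψ|) |ψ ⊗ ψ⟩ = 2/(d+1). In particular, every d-dimensional quantum money scheme admits a simple counterfeiting attack succeeding with probability at least 2/(d+1). -/

import Mathlib

open Matrix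
open scoped Kronecker

/-- The swap operator `V` on `ℂ^d ⊗ ℂ^d`, acting by `V(|x⟩⊗|y⟩) = |y⟩⊗|x⟩`. -/
def swapOp (d : ℕ) : Matrix (Fin d × Fin d) (Fin d × Fin d) ℂ :=
  Matrix.of fun p q => if p.1 = q.2 ∧ p.2 = q.1 then 1 else 0

/-- The orthogonal projection `S = (I + V)/2` onto the symmetric subspace of
`ℂ^d ⊗ ℂ^d`. -/
noncomputable def symProj (d : ℕ) : Matrix (Fin d × Fin d) (Fin d × Fin d) ℂ :=
  (2 : ℂ)⁻¹ • (1 + swapOp d)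

/-- Werner's symmetric cloning channel `Φ(ρ) = (2/(d+1)) S (ρ ⊗ I) S`. -/
noncomputable def werner (d : ℕ) (ρ : Matrix (Fin d) (Fin d) ℂ) :
    Matrix (Fin d × Fin d) (Fin d × Fin d) ℂ :=
  (2 / (d + 1) : ℂ) • (symProj d * (ρ ⊗ₖ (1 : Matrix (Fin d) (Fin d) ℂ)) * symProj d)

/-- Tensor product `ψ ⊗ φ` of two vectors in `ℂ^d`. -/
def tensd {d : ℕ} (ψ φ : Fin d → ℂ) : Fin d × Fin d → ℂ := fun p => ψ p.1 * φ p.2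

/-!
With `Eᵢ = kronStdBasis i`, i.e. `Eᵢ v = v ⊗ eᵢ`, one has `∑ᵢ Eᵢ ρ Eᵢ* = ρ ⊗ I`, so `Φ` has
Kraus operators `√(2/(d+1)) S Eᵢ`. They are trace preserving because `∑ᵢ Eᵢ* Eᵢ = d I` and
`∑ᵢ Eᵢ* V Eᵢ = I` give `∑ᵢ Eᵢ* S Eᵢ = (d+1)/2 · I`. Since `S` fixes `ψ ⊗ ψ`, this product vector
is an eigenvector of `Φ(|ψ⟩⟨ψ|)` with eigenvalue `2/(d+1)`; expanding the fidelity over the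
Kraus operators turns it into the success probability `∑ᵢ |⟨ψ ⊗ ψ| Aᵢ |ψ⟩|²`, which is thus
`2/(d+1)` for every state of any money ensemble.
-/

theorem swapOp_eq_permMatrix (d : ℕ) :
    swapOp d = Equiv.Perm.permMatrix ℂ (Equiv.prodComm (Fin d) (Fin d)) := by
  ext p q
  simp [swapOp, PEquiv.toMatrix_apply, Prod.ext_iff, eq_comm, and_comm]

theorem swapOp_mul_self (d : ℕ) : swapOp d * swapOp d = 1 := by
  rw [swapOp_eq_permMatrix, ← permMatrix_mul]
  exact permMatrix_one

theorem swapOp_isHermitian (d : ℕ) : (swapOp d).IsHermitian := by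
  rw [IsHermitian, swapOp_eq_permMatrix, conjTranspose_permMatrix]
  rfl

theorem swapOp_mulVec_tensd {d : ℕ} (a b : Fin d → ℂ) : swapOp d *ᵥ tensd a b = tensd b a := by
  rw [swapOp_eq_permMatrix, permMatrix_mulVec]
  ext p
  exact mul_comm _ _

theorem symProj_isHermitian (d : ℕ) : (symProj d).IsHermitian := by
  rw [IsHermitian, symProj, conjTranspose_smul, conjTranspose_add, conjTranspose_one,
    (swapOp_isHermitian d).eq]
  simp

theorem symProj_mul_self (d : ℕ) : symProj d * symProj d = symProj d := by
  have h : (1 + swapOp d) * (1 + swapOp d) = (2 : ℂ) • (1 + swapOp d) := by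
    rw [add_mul, mul_add, mul_add, swapOp_mul_self, two_smul]
    simp only [mul_one, one_mul]
    abel
  rw [symProj, smul_mul_smul_comm, h, smul_smul]
  norm_num

theorem symProj_mulVec_tensd_self {d : ℕ} (a : Fin d → ℂ) :
    symProj d *ᵥ tensd a a = tensd a a := by
  rw [symProj, smul_mulVec, add_mulVec, one_mulVec, swapOp_mulVec_tensd, ← two_smul ℂ, smul_smul]
  norm_num

section KronStdBasis

variable (m : Type*) {n : Type*} (R : Type*) [DecidableEq m] [DecidableEq n] [Semiring R]

def kronStdBasis (i : n) : Matrix (m × n) m R :=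
  Matrix.of fun p z => if p = (z, i) then 1 else 0

variable {m R} [Fintype m] [StarRing R]

theorem kronStdBasis_mul_mul_conjTranspose (i : n) (ρ : Matrix m m R) :
    kronStdBasis m R i * ρ * (kronStdBasis m R i)ᴴ
      = Matrix.of fun p q => if p.2 = i ∧ q.2 = i then ρ p.1 q.1 else 0 := by
  ext ⟨x, j⟩ ⟨y, k⟩
  simp only [kronStdBasis, mul_apply, conjTranspose_apply, of_apply, apply_ite (star : R → R),
    star_one, star_zero, Prod.ext_iff]
  by_cases j = i <;> by_cases k = i <;> simp [*]

variable [Fintype n]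

theorem sum_kronStdBasis_mul_mul_conjTranspose (ρ : Matrix m m R) :
    ∑ i, kronStdBasis m R i * ρ * (kronStdBasis m R i)ᴴ = ρ ⊗ₖ (1 : Matrix n n R) := by
  ext ⟨x, j⟩ ⟨y, k⟩
  simp [kronStdBasis_mul_mul_conjTranspose, Matrix.sum_apply, one_apply, ite_and, eq_comm]

theorem sum_conjTranspose_kronStdBasis_mul_kronStdBasis :
    ∑ i : n, (kronStdBasis m R i)ᴴ * kronStdBasis m R i = (Fintype.card n : R) • 1 := by
  ext x y
  simp [kronStdBasis, Matrix.sum_apply, mul_apply, apply_ite (star : R → R), one_apply, eq_comm]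

end KronStdBasis

theorem sum_conjTranspose_kronStdBasis_mul_swapOp_mul (d : ℕ) :
    ∑ i : Fin d, (kronStdBasis (Fin d) ℂ i)ᴴ * (swapOp d * kronStdBasis (Fin d) ℂ i) = 1 := by
  ext x y
  simp [kronStdBasis, Matrix.sum_apply, swapOp, mul_apply, one_apply, Fintype.sum_prod_type,
    ite_and, eq_comm]

theorem sum_conjTranspose_kronStdBasis_mul_symProj_mul (d : ℕ) :
    ∑ i : Fin d, (kronStdBasis (Fin d) ℂ i)ᴴ * (symProj d * kronStdBasis (Fin d) ℂ i)
      = (((d : ℂ) + 1) / 2) • 1 := by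
  simp only [symProj, Matrix.smul_mul, Matrix.mul_smul, Matrix.add_mul, Matrix.one_mul,
    Matrix.mul_add, Finset.sum_add_distrib, ← Finset.smul_sum,
    sum_conjTranspose_kronStdBasis_mul_kronStdBasis, sum_conjTranspose_kronStdBasis_mul_swapOp_mul,
    Fintype.card_fin]
  rw [div_eq_inv_mul, mul_smul, add_smul, one_smul]

noncomputable def wernerKraus (d : ℕ) (i : Fin d) : Matrix (Fin d × Fin d) (Fin d) ℂ :=
  (Real.sqrt (2 / (d + 1)) : ℂ) • (symProj d * kronStdBasis (Fin d) ℂ i)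

theorem ofReal_sqrt_two_div_mul_self (d : ℕ) :
    (Real.sqrt (2 / (d + 1)) : ℂ) * (Real.sqrt (2 / (d + 1)) : ℂ) = 2 / (d + 1) := by
  rw [← Complex.ofReal_mul, Real.mul_self_sqrt (by positivity)]
  push_cast
  rfl

theorem sum_conjTranspose_wernerKraus_mul (d : ℕ) :
    ∑ i, (wernerKraus d i)ᴴ * wernerKraus d i = 1 := by
  have hS : (symProj d)ᴴ * symProj d = symProj d := by
    rw [(symProj_isHermitian d).eq, symProj_mul_self]
  simp only [wernerKraus, conjTranspose_smul, conjTranspose_mul, Complex.star_def,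
    Complex.conj_ofReal, Matrix.smul_mul, Matrix.mul_smul, smul_smul, ← Finset.smul_sum,
    Matrix.mul_assoc, ← Matrix.mul_assoc (symProj d)ᴴ, hS, ofReal_sqrt_two_div_mul_self,
    sum_conjTranspose_kronStdBasis_mul_symProj_mul]
  rw [div_mul_div_cancel₀ (Nat.cast_add_one_ne_zero d), div_self two_ne_zero, one_smul]

theorem werner_eq_sum_wernerKraus (d : ℕ) (ρ : Matrix (Fin d) (Fin d) ℂ) :
    werner d ρ = ∑ i, wernerKraus d i * ρ * (wernerKraus d i)ᴴ := by
  simp only [wernerKraus, conjTranspose_smul, conjTranspose_mul, (symProj_isHermitian d).eq,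
    Complex.star_def, Complex.conj_ofReal, Matrix.smul_mul, Matrix.mul_smul, smul_smul,
    ← Finset.smul_sum, ofReal_sqrt_two_div_mul_self, werner,
    ← sum_kronStdBasis_mul_mul_conjTranspose, Finset.mul_sum, Finset.sum_mul, Matrix.mul_assoc]

theorem kronecker_one_mulVec_tensd {d : ℕ} (ρ : Matrix (Fin d) (Fin d) ℂ) (a b : Fin d → ℂ) :
    (ρ ⊗ₖ (1 : Matrix (Fin d) (Fin d) ℂ)) *ᵥ tensd a b = tensd (ρ *ᵥ a) b := by
  ext ⟨x, j⟩
  simp [tensd, mulVec, dotProduct, one_apply, Fintype.sum_prod_type, Finset.sum_mul, mul_assoc]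

theorem star_tensd {d : ℕ} (a b : Fin d → ℂ) : star (tensd a b) = tensd (star a) (star b) := by
  ext p
  simp [tensd]

theorem tensd_dotProduct_tensd {d : ℕ} (a b x y : Fin d → ℂ) :
    tensd a b ⬝ᵥ tensd x y = (a ⬝ᵥ x) * (b ⬝ᵥ y) := by
  simp only [dotProduct, tensd, Fintype.sum_prod_type, Finset.sum_mul_sum]
  exact Finset.sum_congr rfl fun _ _ => Finset.sum_congr rfl fun _ _ => by ring

theorem werner_mulVec_tensd_self {d : ℕ} {ψ : Fin d → ℂ} (hψ : star ψ ⬝ᵥ ψ = 1) :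
    werner d (vecMulVec ψ (star ψ)) *ᵥ tensd ψ ψ = (2 / (d + 1) : ℂ) • tensd ψ ψ := by
  rw [werner, smul_mulVec, ← mulVec_mulVec, ← mulVec_mulVec, symProj_mulVec_tensd_self,
    kronecker_one_mulVec_tensd, vecMulVec_mulVec, hψ, MulOpposite.op_one, one_smul,
    symProj_mulVec_tensd_self]

theorem werner_fidelity {d : ℕ} {ψ : Fin d → ℂ} (hψ : star ψ ⬝ᵥ ψ = 1) :
    star (tensd ψ ψ) ⬝ᵥ werner d (vecMulVec ψ (star ψ)) *ᵥ tensd ψ ψ = (2 / (d + 1) : ℂ) := by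
  rw [werner_mulVec_tensd_self hψ, dotProduct_smul, star_tensd, tensd_dotProduct_tensd, hψ,
    mul_one, smul_eq_mul, mul_one]

theorem star_dotProduct_mul_vecMulVec_mul_conjTranspose_mulVec {m n : Type*} [Fintype m]
    [Fintype n] (M : Matrix m n ℂ) (ψ : n → ℂ) (φ : m → ℂ) :
    star φ ⬝ᵥ (M * vecMulVec ψ (star ψ) * Mᴴ) *ᵥ φ = Complex.normSq (star φ ⬝ᵥ M *ᵥ ψ) := by
  rw [mul_vecMulVec, vecMulVec_mul, ← star_mulVec, vecMulVec_mulVec, dotProduct_smul,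
    star_dotProduct (M *ᵥ ψ), MulOpposite.smul_eq_mul_unop, MulOpposite.unop_op, Complex.star_def,
    Complex.mul_conj]

theorem sum_normSq_wernerKraus {d : ℕ} {ψ : Fin d → ℂ} (hψ : star ψ ⬝ᵥ ψ = 1) :
    ∑ i, Complex.normSq (star (tensd ψ ψ) ⬝ᵥ wernerKraus d i *ᵥ ψ) = 2 / (d + 1) := by
  have h := werner_fidelity hψ
  simp only [werner_eq_sum_wernerKraus, sum_mulVec, dotProduct_sum,
    star_dotProduct_mul_vecMulVec_mul_conjTranspose_mulVec] at h
  apply Complex.ofReal_injective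
  push_cast
  exact h

theorem werner_cloner_general (d : ℕ) :
    (∃ (m : ℕ) (A : Fin m → Matrix (Fin d × Fin d) (Fin d) ℂ),
      (∑ i, (A i)ᴴ * A i = 1) ∧
      ∀ ρ : Matrix (Fin d) (Fin d) ℂ, werner d ρ = ∑ i, A i * ρ * (A i)ᴴ) ∧
    (∀ ψ : Fin d → ℂ, star ψ ⬝ᵥ ψ = 1 →
      star (tensd ψ ψ) ⬝ᵥ (werner d (vecMulVec ψ (star ψ))).mulVec (tensd ψ ψ)
        = (2 / (d + 1) : ℂ)) ∧
    (∀ (N : ℕ) (p : Fin N → ℝ) (ψ : Fin N → (Fin d → ℂ)),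
      (∀ k, 0 ≤ p k) → (∑ k, p k = 1) → (∀ k, star (ψ k) ⬝ᵥ ψ k = 1) →
      ∃ (m : ℕ) (A : Fin m → Matrix (Fin d × Fin d) (Fin d) ℂ),
        (∑ i, (A i)ᴴ * A i = 1) ∧
        (2 / (d + 1) : ℝ) ≤ ∑ k, p k * ∑ i,
          Complex.normSq (star (tensd (ψ k) (ψ k)) ⬝ᵥ (A i).mulVec (ψ k))) := by
  refine ⟨⟨d, wernerKraus d, sum_conjTranspose_wernerKraus_mul d, werner_eq_sum_wernerKraus d⟩,
    fun ψ hψ => werner_fidelity hψ, fun N p ψ _ hp hψ => ?_⟩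
  refine ⟨d, wernerKraus d, sum_conjTranspose_wernerKraus_mul d, le_of_eq ?_⟩
  simp only [sum_normSq_wernerKraus (hψ _), ← Finset.sum_mul, hp, one_mul]

/-- Werner's cloning map `Φ(ρ) = (2/(d+1)) S (ρ ⊗ I) S` is a quantum channel
(it admits a Kraus decomposition with `∑ i, (A i)ᴴ * A i = 1`), and it clones
every unit vector `|ψ⟩ ∈ ℂ^d` with probability
`⟨ψ ⊗ ψ| Φ(|ψ⟩⟨ψ|) |ψ ⊗ ψ⟩ = 2/(d+1)`.  In particular, every `d`-dimensional
quantum money scheme admits a simple counterfeiting attack succeeding with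
probability at least `2/(d+1)`. -/
theorem werner_cloner (d : ℕ) (hd : 1 ≤ d) :
    (∃ (m : ℕ) (A : Fin m → Matrix (Fin d × Fin d) (Fin d) ℂ),
      (∑ i, (A i)ᴴ * A i = 1) ∧
      ∀ ρ : Matrix (Fin d) (Fin d) ℂ, werner d ρ = ∑ i, A i * ρ * (A i)ᴴ) ∧
    (∀ ψ : Fin d → ℂ, star ψ ⬝ᵥ ψ = 1 →
      star (tensd ψ ψ) ⬝ᵥ (werner d (vecMulVec ψ (star ψ))).mulVec (tensd ψ ψ)
        = (2 / (d + 1) : ℂ)) ∧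
    (∀ (N : ℕ) (p : Fin N → ℝ) (ψ : Fin N → (Fin d → ℂ)),
      (∀ k, 0 ≤ p k) → (∑ k, p k = 1) → (∀ k, star (ψ k) ⬝ᵥ ψ k = 1) →
      ∃ (m : ℕ) (A : Fin m → Matrix (Fin d × Fin d) (Fin d) ℂ),
        (∑ i, (A i)ᴴ * A i = 1) ∧
        (2 / (d + 1) : ℝ) ≤ ∑ k, p k * ∑ i,
          Complex.normSq (star (tensd (ψ k) (ψ k)) ⬝ᵥ (A i).mulVec (ψ k))) :=
  werner_cloner_general d
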